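/- arXiv:1811.11331 — 4 statements merged into one kernel-verified Lean document; each statement's English description precedes it below -/
import Mathlib

section
/- With the topology control algorithm defined as follows—each vertex i connects to the maximum-index vertex of each connected component of the Gilbert graph induced on its lesser neighborhood N_i = {j < i : |x_i - x_j| ≤ R}—the resulting graph (V, A) is connected if and only if the Gilbert graph (V, g(V)) is connected. -/
noncomputable section

/-- The Gilbert graph on vertex set `Fin n`: `i ≠ j` are adjacent iff `dist (x i) (x j) ≤ R`. -/
def gilbert (n : ℕ) (x : Fin n → EuclideanSpace ℝ (Fin 2)) (R : ℝ) : SimpleGraph (Fin n) where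
  Adj i j := i ≠ j ∧ dist (x i) (x j) ≤ R
  symm := by
    constructor
    intro i j h
    exact ⟨h.1.symm, by rw [dist_comm]; exact h.2⟩
  loopless := by constructor; intro i h; exact h.1 rfl

/-- The lesser neighborhood `N_i = {j < i : dist (x i) (x j) ≤ R}`. -/
def lesserN (n : ℕ) (x : Fin n → EuclideanSpace ℝ (Fin 2)) (R : ℝ) (i : Fin n) : Set (Fin n) :=
  {j | j < i ∧ dist (x i) (x j) ≤ R}

/-- Vertex `i` initiates a connection to `j` iff `j` is the maximum-index vertex of its
connected component in the Gilbert graph induced on the lesser neighborhood `N_i`. -/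
def initiates (n : ℕ) (x : Fin n → EuclideanSpace ℝ (Fin 2)) (R : ℝ) (i j : Fin n) : Prop :=
  ∃ hj : j ∈ lesserN n x R i,
    ∀ k, ∀ hk : k ∈ lesserN n x R i,
      ((gilbert n x R).induce (lesserN n x R i)).Reachable ⟨j, hj⟩ ⟨k, hk⟩ → k ≤ j

/-- The topology produced by Algorithm 1: the symmetrization of the initiated connections. -/
def Agraph (n : ℕ) (x : Fin n → EuclideanSpace ℝ (Fin 2)) (R : ℝ) : SimpleGraph (Fin n) where
  Adj i j := initiates n x R i j ∨ initiates n x R j i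
  symm := ⟨fun i j h => Or.symm h⟩
  loopless := by
    constructor
    intro i h
    rcases h with ⟨hj, _⟩ | ⟨hj, _⟩ <;> exact absurd hj.1 (lt_irrefl i)

/-! Every Gilbert edge `j < i` is bridged in `Agraph` by strong induction on `i`: `i` initiates a
connection to the maximum `m` of the component of `j` in the Gilbert graph on `N_i`, and a Gilbert
path from `m` to `j` inside `N_i` uses only edges between vertices below `i`, which the induction
hypothesis already bridges. -/

namespace SimpleGraph

variable {V W : Type*}

theorem Reachable.of_forall_adj_reachable {G : SimpleGraph V} {H : SimpleGraph W} (f : V → W)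
    (h : ∀ u v, G.Adj u v → H.Reachable (f u) (f v)) {u v : V} (huv : G.Reachable u v) :
    H.Reachable (f u) (f v) := by
  rw [reachable_iff_reflTransGen] at huv ⊢
  exact huv.lift' f fun a b hab => (reachable_iff_reflTransGen _ _).mp (h a b hab)

theorem exists_reachable_forall_reachable_le [LinearOrder V] [Finite V] (G : SimpleGraph V)
    (v : V) : ∃ m, G.Reachable v m ∧ ∀ k, G.Reachable m k → k ≤ m := by
  obtain ⟨m, hvm, hmax⟩ :=
    Set.exists_max_image {k | G.Reachable v k} id (Set.toFinite _) ⟨v, Reachable.refl v⟩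
  exact ⟨m, hvm, fun k hmk => hmax k (hvm.trans hmk)⟩

end SimpleGraph

open SimpleGraph

section

variable {n : ℕ} {x : Fin n → EuclideanSpace ℝ (Fin 2)} {R : ℝ}

theorem Agraph_le_gilbert : Agraph n x R ≤ gilbert n x R := by
  rintro i j (⟨⟨hlt, hd⟩, -⟩ | ⟨⟨hlt, hd⟩, -⟩)
  · exact ⟨hlt.ne', hd⟩
  · exact ⟨hlt.ne, dist_comm (x i) (x j) ▸ hd⟩

theorem Agraph_reachable_of_gilbert_adj_of_lt (i j : Fin n) (hadj : (gilbert n x R).Adj i j)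
    (hji : j < i) : (Agraph n x R).Reachable i j := by
  induction i using WellFoundedLT.induction generalizing j with
  | ind i ih =>
    have hj : j ∈ lesserN n x R i := ⟨hji, hadj.2⟩
    obtain ⟨⟨m, hm⟩, hjm, hmax⟩ :=
      ((gilbert n x R).induce (lesserN n x R i)).exists_reachable_forall_reachable_le ⟨j, hj⟩
    have hinit : initiates n x R i m := ⟨hm, fun k hk => hmax ⟨k, hk⟩⟩
    have hmj : (Agraph n x R).Reachable m j := by
      refine hjm.symm.of_forall_adj_reachable Subtype.val fun u v huv => ?_
      rcases lt_or_gt_of_ne huv.ne with hvu | huv'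
      · exact (ih v v.2.1 u huv.symm hvu).symm
      · exact ih u u.2.1 v huv huv'
    exact (Adj.reachable (Or.inl hinit)).trans hmj

theorem Agraph_reachable_of_gilbert_adj {i j : Fin n} (hadj : (gilbert n x R).Adj i j) :
    (Agraph n x R).Reachable i j := by
  rcases lt_or_gt_of_ne hadj.ne with hij | hji
  · exact (Agraph_reachable_of_gilbert_adj_of_lt j i hadj.symm hij).symm
  · exact Agraph_reachable_of_gilbert_adj_of_lt i j hadj hji

end

theorem Agraph_connected_iff_gilbert_connected_general
    (n : ℕ) (x : Fin n → EuclideanSpace ℝ (Fin 2)) (R : ℝ) :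
    (Agraph n x R).Connected ↔ (gilbert n x R).Connected := by
  refine ⟨fun h => h.mono Agraph_le_gilbert, fun h => ?_⟩
  have : Nonempty (Fin n) := h.nonempty
  exact Connected.mk fun u v =>
    (h.preconnected u v).of_forall_adj_reachable id fun _ _ => Agraph_reachable_of_gilbert_adj

/-- The topology generated by Algorithm 1 is connected if and only if the Gilbert graph
is connected. -/
theorem Agraph_connected_iff_gilbert_connected
    (n : ℕ) (x : Fin n → EuclideanSpace ℝ (Fin 2)) (R : ℝ) (hR : 0 < R) :
    (Agraph n x R).Connected ↔ (gilbert n x R).Connected :=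
  Agraph_connected_iff_gilbert_connected_general n x R
end
end

section
/- With the topology control algorithm of Algorithm 1 (each vertex i connects to the maximum-index vertex of each connected component of the Gilbert graph induced on its lesser neighborhood), at most 5 vertices with index greater than i initiate a connection to vertex i; consequently, the degree of every vertex in the resulting graph (V, A) is at most 10. -/
noncomputable section

/-!
Two distinct vertices that initiate a connection to `i` are more than `R` apart: otherwise the
smaller one lies in the lesser neighbourhood of the larger one, adjacent there to `i` and of larger
index than `i`, so `i` is not the maximum of its component. Likewise two distinct vertices to
which `i` initiates a connection are more than `R` apart, as otherwise they share a component of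
`N_i`. Either set is therefore a family of points in the closed disc of radius `R` about `x i` with
pairwise distances exceeding `R`. By the law of cosines any two of them subtend an angle greater
than `π / 3` at the centre, and measuring angles from one of the points, a pigeonhole argument over
six arcs of length `π / 3` leaves room for at most five points.
-/

open InnerProductGeometry Module Real

theorem InnerProductGeometry.pi_div_three_lt_angle_of_norm_le_of_lt_norm_sub
    {V : Type*} [NormedAddCommGroup V] [InnerProductSpace ℝ V] {u v : V} {R : ℝ}
    (hu : ‖u‖ ≤ R) (hv : ‖v‖ ≤ R) (huv : R < ‖u - v‖) : π / 3 < angle u v := by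
  by_contra! h
  have hcos : 1 / 2 ≤ cos (angle u v) := by
    rw [← cos_pi_div_three]
    exact cos_le_cos_of_nonneg_of_le_pi (angle_nonneg u v) (by linarith [pi_pos]) h
  have hlaw := norm_sub_sq_eq_norm_sq_add_norm_sq_sub_two_mul_norm_mul_norm_mul_cos_angle u v
  nlinarith [norm_nonneg u, norm_nonneg v, norm_nonneg (u - v),
    mul_nonneg (norm_nonneg u) (norm_nonneg v)]

theorem Int.abs_sub_lt_one_of_ceil_eq_ceil {R : Type*} [Ring R] [LinearOrder R] [IsOrderedRing R]
    [FloorRing R] {a b : R} (h : ⌈a⌉ = ⌈b⌉) : |a - b| < 1 := by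
  have := abs_sub_lt_one_of_floor_eq_floor (a := -a) (b := -b) (by rw [floor_neg, floor_neg, h])
  rwa [neg_sub_neg, abs_sub_comm] at this

namespace Complex

theorem arg_div_eq_sub_arg_iff {x y : ℂ} (hx : x ≠ 0) (hy : y ≠ 0) :
    (x / y).arg = x.arg - y.arg ↔ x.arg - y.arg ∈ Set.Ioc (-π) π := by
  rw [← arg_coe_angle_toReal_eq_arg, arg_div_coe_angle hx hy, ← Real.Angle.coe_sub,
    Real.Angle.toReal_coe_eq_self_iff_mem_Ioc]

theorem angle_eq_abs_sub_arg {x y : ℂ} (hx : x ≠ 0) (hy : y ≠ 0)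
    (h : x.arg - y.arg ∈ Set.Ioc (-π) π) : angle x y = |x.arg - y.arg| := by
  rw [angle_eq_abs_arg hx hy, (arg_div_eq_sub_arg_iff hx hy).2 h]

theorem card_le_five_of_pairwise_pi_div_three_lt_angle {ι : Type*} {p : ι → ℂ}
    (hp₀ : ∀ s, p s ≠ 0) (hp : Pairwise fun s t => π / 3 < angle (p s) (p t)) :
    Nat.card ι ≤ 5 := by
  rcases isEmpty_or_nonempty ι with hι | ⟨⟨s₀⟩⟩
  · simp
  set θ : ι → ℝ := fun s => arg (p s / p s₀)
  have hθ₀ : θ s₀ = 0 := by simp [θ]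
  have hangle (s t : ι) (h : |θ s - θ t| < π) : angle (p s) (p t) = |θ s - θ t| := by
    have hq (s : ι) : p s / p s₀ ≠ 0 := div_ne_zero (hp₀ s) (hp₀ s₀)
    rw [← angle_mul_right (inv_ne_zero (hp₀ s₀)), ← div_eq_mul_inv, ← div_eq_mul_inv,
      angle_eq_abs_sub_arg (hq s) (hq t) ⟨(abs_lt.1 h).1, (abs_lt.1 h).2.le⟩]
  have heq_of_angle_le {s t : ι} (h : angle (p s) (p t) ≤ π / 3) : s = t := by
    by_contra hst
    exact (hp hst).not_ge h
  -- Sector `k` is the arc `((k - 1)π/3, kπ/3]` of `θ`; a point in sector `1` would lie within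
  -- `π/3` of `p s₀`, so only the five sectors listed below are occupied.
  set sector : ι → ℤ := fun s => ⌈3 * θ s / π⌉
  have hsector (s : ι) : sector s ∈ ({-2, -1, 0, 2, 3} : Finset ℤ) := by
    have hlo : -2 ≤ sector s := by
      rw [Int.le_ceil_iff, lt_div_iff₀ pi_pos]
      push_cast
      linarith [neg_pi_lt_arg (p s / p s₀)]
    have hhi : sector s ≤ 3 := by
      rw [Int.ceil_le, div_le_iff₀ pi_pos]
      push_cast
      linarith [arg_le_pi (p s / p s₀)]
    have hne : sector s ≠ 1 := by
      intro h1
      rw [Int.ceil_eq_iff, div_le_iff₀ pi_pos, lt_div_iff₀ pi_pos] at h1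
      push_cast at h1
      have hs : s = s₀ := heq_of_angle_le (by
        rw [hangle s s₀ (by rw [hθ₀, sub_zero, abs_of_pos (by linarith)]; linarith), hθ₀,
          sub_zero, abs_of_pos (by linarith)]
        linarith)
      rw [hs, hθ₀] at h1
      linarith
    simp only [Finset.mem_insert, Finset.mem_singleton]
    omega
  have hinj : Function.Injective
      fun s => (⟨sector s, hsector s⟩ : ({-2, -1, 0, 2, 3} : Finset ℤ)) := by
    intro s t hst
    have h := Int.abs_sub_lt_one_of_ceil_eq_ceil (congrArg Subtype.val hst)
    rw [← sub_div, ← mul_sub, abs_div, abs_mul, abs_of_pos pi_pos, abs_of_pos three_pos,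
      div_lt_one pi_pos] at h
    refine heq_of_angle_le ?_
    rw [hangle s t (by linarith [abs_nonneg (θ s - θ t)])]
    linarith
  exact (Nat.card_le_card_of_injective _ hinj).trans_eq (by rw [Nat.card_eq_finsetCard]; rfl)

theorem card_le_five_of_norm_le_of_lt_norm_sub {ι : Type*} {p : ι → ℂ} {R : ℝ}
    (hp : ∀ s, ‖p s‖ ≤ R) (hsep : Pairwise fun s t => R < ‖p s - p t‖) :
    Nat.card ι ≤ 5 := by
  by_cases hp₀ : ∀ s, p s ≠ 0
  · exact card_le_five_of_pairwise_pi_div_three_lt_angle hp₀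
      (hsep.mono fun s t => pi_div_three_lt_angle_of_norm_le_of_lt_norm_sub (hp s) (hp t))
  push Not at hp₀
  obtain ⟨s₀, hs₀⟩ := hp₀
  have heq (s : ι) : s = s₀ := by
    by_contra hs
    have hsep' : R < ‖p s - p s₀‖ := hsep hs
    rw [hs₀, sub_zero] at hsep'
    exact hsep'.not_ge (hp s)
  have : Subsingleton ι := ⟨fun s t => (heq s).trans (heq t).symm⟩
  exact (Finite.card_le_one_iff_subsingleton.2 this).trans (by norm_num)

end Complex

theorem card_le_five_of_dist_le_of_lt_dist {E ι : Type*} [NormedAddCommGroup E]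
    [InnerProductSpace ℝ E] (hE : finrank ℝ E = 2) {p : ι → E} {c : E} {R : ℝ}
    (hc : ∀ s, dist (p s) c ≤ R) (hsep : Pairwise fun s t => R < dist (p s) (p t)) :
    Nat.card ι ≤ 5 := by
  have : FiniteDimensional ℝ E := Module.finite_of_finrank_eq_succ hE
  let e : E ≃ₗᵢ[ℝ] ℂ := ((stdOrthonormalBasis ℝ E).reindex (finCongr hE)).repr.trans
    Complex.orthonormalBasisOneI.repr.symm
  refine Complex.card_le_five_of_norm_le_of_lt_norm_sub (p := fun s => e (p s - c)) (R := R)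
    (fun s => ?_) (hsep.mono fun s t h => ?_)
  · rw [e.norm_map, ← dist_eq_norm]
    exact hc s
  · rw [← map_sub, e.norm_map, sub_sub_sub_cancel_right, ← dist_eq_norm]
    exact h

section Algorithm

variable {n : ℕ} {x : Fin n → EuclideanSpace ℝ (Fin 2)} {R : ℝ} {i j k : Fin n}

theorem initiates.lt (h : initiates n x R i j) : j < i := h.1.1

theorem initiates.dist_le (h : initiates n x R i j) : dist (x i) (x j) ≤ R := h.1.2

theorem lt_dist_of_same_initiator {j' : Fin n} (hj : initiates n x R i j)
    (hj' : initiates n x R i j') (hne : j ≠ j') : R < dist (x j) (x j') := by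
  obtain ⟨hjN, hjmax⟩ := hj
  obtain ⟨hj'N, hj'max⟩ := hj'
  by_contra! hd
  have hadj : ((gilbert n x R).induce (lesserN n x R i)).Adj ⟨j, hjN⟩ ⟨j', hj'N⟩ :=
    ⟨hne, hd⟩
  exact hne ((hj'max j hjN hadj.symm.reachable).antisymm (hjmax j' hj'N hadj.reachable))

theorem lt_dist_of_same_target_of_lt {k' : Fin n} (hk : initiates n x R k i)
    (hk' : initiates n x R k' i) (hlt : k < k') : R < dist (x k) (x k') := by
  obtain ⟨hiN, himax⟩ := hk'
  by_contra! hd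
  have hkN : k ∈ lesserN n x R k' := ⟨hlt, by rwa [dist_comm]⟩
  have hadj : ((gilbert n x R).induce (lesserN n x R k')).Adj ⟨i, hiN⟩ ⟨k, hkN⟩ :=
    ⟨hk.lt.ne, by rw [dist_comm]; exact hk.dist_le⟩
  exact (himax k hkN hadj.reachable).not_gt hk.lt

theorem lt_dist_of_same_target {k' : Fin n} (hk : initiates n x R k i)
    (hk' : initiates n x R k' i) (hne : k ≠ k') : R < dist (x k) (x k') := by
  rcases hne.lt_or_gt with hlt | hlt
  · exact lt_dist_of_same_target_of_lt hk hk' hlt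
  · rw [dist_comm]
    exact lt_dist_of_same_target_of_lt hk' hk hlt

theorem card_targets_le_five (i : Fin n) : Nat.card {j // initiates n x R i j} ≤ 5 :=
  card_le_five_of_dist_le_of_lt_dist finrank_euclideanSpace_fin (p := fun j => x j) (c := x i)
    (fun j => (dist_comm _ _).trans_le j.2.dist_le)
    fun j j' hne => lt_dist_of_same_initiator j.2 j'.2 (Subtype.coe_ne_coe.2 hne)

theorem card_initiators_le_five (i : Fin n) : Nat.card {k // initiates n x R k i} ≤ 5 :=
  card_le_five_of_dist_le_of_lt_dist finrank_euclideanSpace_fin (p := fun k => x k) (c := x i)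
    (fun k => k.2.dist_le)
    fun k k' hne => lt_dist_of_same_target k.2 k'.2 (Subtype.coe_ne_coe.2 hne)

end Algorithm

theorem Agraph_degree_le_ten_general
    (n : ℕ) (x : Fin n → EuclideanSpace ℝ (Fin 2)) (R : ℝ) (i : Fin n) :
    Nat.card {k : Fin n // i < k ∧ initiates n x R k i} ≤ 5 ∧
    Nat.card ((Agraph n x R).neighborSet i) ≤ 10 := by
  have hinitiators : Nat.card {k // i < k ∧ initiates n x R k i} =
      Nat.card {k // initiates n x R k i} :=
    Nat.card_congr (Equiv.subtypeEquivRight fun _ => and_iff_right_of_imp initiates.lt)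
  refine ⟨hinitiators ▸ card_initiators_le_five i, ?_⟩
  calc Nat.card ((Agraph n x R).neighborSet i)
      = Nat.card ↥({j | initiates n x R i j} ∪ {k | initiates n x R k i}) := rfl
    _ ≤ Nat.card {j // initiates n x R i j} + Nat.card {k // initiates n x R k i} :=
      Set.card_union_le _ _
    _ ≤ 5 + 5 := add_le_add (card_targets_le_five i) (card_initiators_le_five i)

/-- At most 5 vertices of index greater than `i` initiate a connection to `i`;
consequently every vertex of the topology generated by Algorithm 1 has degree at most 10. -/
theorem Agraph_degree_le_ten
    (n : ℕ) (x : Fin n → EuclideanSpace ℝ (Fin 2)) (R : ℝ) (hR : 0 < R) (i : Fin n) :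
    Nat.card {k : Fin n // i < k ∧ initiates n x R k i} ≤ 5 ∧
    Nat.card ((Agraph n x R).neighborSet i) ≤ 10 :=
  Agraph_degree_le_ten_general n x R i
end
end

section
/- Under Algorithm 2 with parameter δ ≥ 1 (each vertex i first connects to the maximum-index vertex of each connected component of the Gilbert graph induced on its lesser neighborhood N_i, then greedily adds further lesser neighbors in decreasing index order and then greater neighbors in increasing index order until it has chosen min{deg_G(i), δ} connections), the set C_i of connections initiated by vertex i satisfies |C_i| ≤ max{δ, 5}; consequently the final topology has at most max{δ,5}·n edges. -/
noncomputable section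

attribute [local instance] Classical.propDecidable

/-- The lesser neighbors of `i`, as a finset. -/
def lesserF (n : ℕ) (x : Fin n → EuclideanSpace ℝ (Fin 2)) (R : ℝ) (i : Fin n) :
    Finset (Fin n) :=
  Finset.univ.filter (fun j => j < i ∧ dist (x i) (x j) ≤ R)

/-- The greater neighbors of `i`, as a finset. -/
def greaterF (n : ℕ) (x : Fin n → EuclideanSpace ℝ (Fin 2)) (R : ℝ) (i : Fin n) :
    Finset (Fin n) :=
  Finset.univ.filter (fun j => i < j ∧ dist (x i) (x j) ≤ R)

/-- The connections initiated in Line 1 of Algorithm 2 (those of Algorithm 1):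
the maximum-index vertex of each component of the Gilbert graph induced on `N_i`. -/
def MsetF (n : ℕ) (x : Fin n → EuclideanSpace ℝ (Fin 2)) (R : ℝ) (i : Fin n) :
    Finset (Fin n) :=
  Finset.univ.filter (fun j => initiates n x R i j)

/-- Greedy phase adding `max (pool \ C)` while `|C| < δ` and `pool \ C ≠ ∅`
(Lines 2–3 of Algorithm 2), with explicit fuel. -/
def phaseMax {n : ℕ} (δ : ℕ) (pool : Finset (Fin n)) :
    ℕ → Finset (Fin n) → Finset (Fin n)
  | 0, C => C
  | fuel + 1, C =>
    if h : C.card < δ ∧ (pool \ C).Nonempty then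
      phaseMax δ pool fuel (insert ((pool \ C).max' h.2) C)
    else C

/-- Greedy phase adding `min (pool \ C)` while `|C| < δ` and `pool \ C ≠ ∅`
(Lines 4–5 of Algorithm 2), with explicit fuel. -/
def phaseMin {n : ℕ} (δ : ℕ) (pool : Finset (Fin n)) :
    ℕ → Finset (Fin n) → Finset (Fin n)
  | 0, C => C
  | fuel + 1, C =>
    if h : C.card < δ ∧ (pool \ C).Nonempty then
      phaseMin δ pool fuel (insert ((pool \ C).min' h.2) C)
    else C

/-- The set `C_i` of connections initiated by vertex `i` under Algorithm 2. -/
def Cset (n : ℕ) (x : Fin n → EuclideanSpace ℝ (Fin 2)) (R : ℝ) (δ : ℕ) (i : Fin n) :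
    Finset (Fin n) :=
  phaseMin δ (greaterF n x R i) n
    (phaseMax δ (lesserF n x R i) n (MsetF n x R i))

/-- The final topology of Algorithm 2: edge `(i,j)` present iff `j ∈ C_i` or `i ∈ C_j`. -/
def topo2 (n : ℕ) (x : Fin n → EuclideanSpace ℝ (Fin 2)) (R : ℝ) (δ : ℕ) :
    SimpleGraph (Fin n) where
  Adj i j := i ≠ j ∧ (j ∈ Cset n x R δ i ∨ i ∈ Cset n x R δ j)
  symm := ⟨fun i j h => ⟨h.1.symm, Or.symm h.2⟩⟩
  loopless := ⟨fun i h => h.1 rfl⟩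

/-! Two vertices chosen in Line 1 are maxima of distinct components of the Gilbert graph on `N_i`,
so they lie more than `R` apart, while both lie within `R` of `x i`. Among six such points two
have directions from `x i` differing by at most `π / 3`, and the law of cosines then puts them
within `R` of each other; so Line 1 yields at most five connections. The greedy phases only add
a connection while `|C_i| < δ`, hence `|C_i| ≤ max δ 5`, and every edge of the topology is
counted in some `C_i`. -/

open Real Complex ComplexConjugate

lemma Real.one_half_le_cos_of_abs_le {t : ℝ} (ht : |t| ≤ π / 3) : 1 / 2 ≤ Real.cos t := by
  rw [← Real.cos_abs, ← Real.cos_pi_div_three]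
  exact Real.cos_le_cos_of_nonneg_of_le_pi (abs_nonneg t) (by linarith [Real.pi_pos]) ht

lemma Real.exists_ne_one_half_le_cos_sub {α : Type*} {S : Finset α} (hS : 6 ≤ S.card)
    {θ : α → ℝ} (hθ : ∀ s ∈ S, θ s ∈ Set.Ioc (-π) π) :
    ∃ a ∈ S, ∃ b ∈ S, a ≠ b ∧ 1 / 2 ≤ Real.cos (θ a - θ b) := by
  obtain ⟨s₀, hs₀, hmin⟩ := S.exists_min_image θ (Finset.card_pos.mp (by omega))
  have hpi := Real.pi_pos
  -- index of the arc of length `π / 3`, counted from `θ s₀`, that contains `θ s`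
  set arc : α → ℤ := fun s => ⌊(θ s - θ s₀) / (π / 3)⌋ with harc
  have harc_mem : ∀ s ∈ S, arc s ∈ Finset.Ico (0 : ℤ) 6 := by
    intro s hs
    have h₁ := hθ s hs
    have h₀ := hθ s₀ hs₀
    rw [Finset.mem_Ico, Int.floor_nonneg, Int.floor_lt, le_div_iff₀ (by positivity),
      div_lt_iff₀ (by positivity)]
    constructor <;> push_cast <;> linarith [hmin s hs, h₁.1, h₁.2, h₀.1, h₀.2]
  by_cases hinj : Set.InjOn arc S
  · -- six points in six arcs: the last arc is occupied, and it lies within `π / 3` of `θ s₀`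
    have himage : S.image arc = Finset.Ico 0 6 :=
      Finset.eq_of_subset_of_card_le (Finset.image_subset_iff.2 harc_mem)
        (by rw [Finset.card_image_of_injOn hinj]; simpa using hS)
    obtain ⟨s₅, hs₅, h₅⟩ : ∃ s ∈ S, arc s = 5 := by
      simpa using (himage ▸ by simp : (5 : ℤ) ∈ S.image arc)
    have h₅' := Int.floor_eq_iff.1 h₅
    rw [le_div_iff₀ (by positivity), div_lt_iff₀ (by positivity)] at h₅'
    refine ⟨s₅, hs₅, s₀, hs₀, ?_, ?_⟩
    · rintro rfl
      simp [harc] at h₅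
    · rw [← Real.cos_two_pi_sub]
      apply Real.one_half_le_cos_of_abs_le
      rw [abs_le]
      constructor <;> push_cast at h₅' <;> linarith [h₅'.1, h₅'.2]
  · simp only [Set.InjOn, not_forall] at hinj
    obtain ⟨a, ha, b, hb, hab, hne⟩ := hinj
    refine ⟨a, ha, b, hb, hne, Real.one_half_le_cos_of_abs_le ?_⟩
    have h := Int.abs_sub_lt_one_of_floor_eq_floor hab
    rw [← sub_div, sub_sub_sub_cancel_right, abs_div, abs_of_pos (by positivity : 0 < π / 3),
      div_lt_one (by positivity)] at h
    exact h.le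

namespace Complex

lemma re_mul_conj_eq_norm_mul_norm_mul_cos (u v : ℂ) :
    (u * conj v).re = ‖u‖ * ‖v‖ * Real.cos (u.arg - v.arg) := by
  rw [Real.cos_sub, mul_re, conj_re, conj_im]
  linear_combination -v.re * norm_mul_cos_arg u - ‖u‖ * Real.cos u.arg * norm_mul_cos_arg v
    - v.im * norm_mul_sin_arg u - ‖u‖ * Real.sin u.arg * norm_mul_sin_arg v

lemma dist_le_of_one_half_le_cos_arg_sub {a b c : ℂ} {R : ℝ} (ha : dist a c ≤ R)
    (hb : dist b c ≤ R) (hcos : 1 / 2 ≤ Real.cos ((a - c).arg - (b - c).arg)) :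
    dist a b ≤ R := by
  rw [dist_eq] at ha hb
  have hab : dist a b = ‖(a - c) - (b - c)‖ := by rw [dist_eq, sub_sub_sub_cancel_right]
  -- law of cosines
  have hsq : ‖(a - c) - (b - c)‖ ^ 2 = ‖a - c‖ ^ 2 + ‖b - c‖ ^ 2
      - 2 * (‖a - c‖ * ‖b - c‖ * Real.cos ((a - c).arg - (b - c).arg)) := by
    rw [← re_mul_conj_eq_norm_mul_norm_mul_cos, Complex.sq_norm, Complex.sq_norm, Complex.sq_norm,
      normSq_sub]
  have hu := norm_nonneg (a - c)
  have hv := norm_nonneg (b - c)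
  rw [hab]
  nlinarith [norm_nonneg ((a - c) - (b - c)), mul_nonneg hu hv, mul_nonneg hu (sub_nonneg.2 hb),
    mul_nonneg hv (sub_nonneg.2 ha)]

theorem card_le_five_of_pairwise_lt_dist {ι : Type*} {S : Finset ι} {p : ι → ℂ} {c : ℂ}
    {R : ℝ} (hc : ∀ i ∈ S, dist (p i) c ≤ R)
    (hS : (S : Set ι).Pairwise fun i j => R < dist (p i) (p j)) : S.card ≤ 5 := by
  by_contra! h
  obtain ⟨i, hi, j, hj, hij, hcos⟩ := Real.exists_ne_one_half_le_cos_sub h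
    (θ := fun i => (p i - c).arg) fun i _ => ⟨neg_pi_lt_arg _, arg_le_pi _⟩
  exact (hS hi hj hij).not_ge (dist_le_of_one_half_le_cos_arg_sub (hc i hi) (hc j hj) hcos)

end Complex

theorem card_le_five_of_pairwise_lt_dist {E : Type*} [NormedAddCommGroup E]
    [InnerProductSpace ℝ E] [Fact (Module.finrank ℝ E = 2)] {ι : Type*} {S : Finset ι}
    {p : ι → E} {c : E} {R : ℝ} (hc : ∀ i ∈ S, dist (p i) c ≤ R)
    (hS : (S : Set ι).Pairwise fun i j => R < dist (p i) (p j)) : S.card ≤ 5 := by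
  have : FiniteDimensional ℝ E := .of_fact_finrank_eq_two
  let f : E ≃ₗᵢ[ℝ] ℂ := ((stdOrthonormalBasis ℝ E).reindex (finCongr Fact.out)).repr.trans
    Complex.orthonormalBasisOneI.repr.symm
  exact Complex.card_le_five_of_pairwise_lt_dist (p := f ∘ p) (c := f c)
    (by simpa using hc) (by simpa using hS)

theorem SimpleGraph.ncard_edgeSet_le_mul_card {V : Type*} [Fintype V] (G : SimpleGraph V)
    (C : V → Finset V) {k : ℕ} (hC : ∀ v, (C v).card ≤ k)
    (hG : ∀ v w, G.Adj v w → w ∈ C v ∨ v ∈ C w) :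
    G.edgeSet.ncard ≤ k * Fintype.card V := by
  let F : Finset (Sym2 V) := Finset.univ.biUnion fun v => (C v).image fun w => s(v, w)
  have hsub : G.edgeSet ⊆ F := by
    intro e he
    induction e with
    | h v w =>
      simp only [Finset.coe_biUnion, Finset.coe_image, Set.mem_iUnion, Set.mem_image, F,
        Finset.mem_coe, Finset.coe_univ, Set.mem_univ, exists_const]
      rcases hG v w he with hw | hv
      · exact ⟨v, w, hw, rfl⟩
      · exact ⟨w, v, hv, Sym2.eq_swap⟩
  calc G.edgeSet.ncard ≤ F.card := by simpa using Set.ncard_le_ncard hsub F.finite_toSet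
    _ ≤ Finset.univ.card * k :=
      Finset.card_biUnion_le_card_mul _ _ _ fun v _ => Finset.card_image_le.trans (hC v)
    _ = k * Fintype.card V := by rw [Finset.card_univ, mul_comm]

section Algorithm

variable {n : ℕ} {x : Fin n → EuclideanSpace ℝ (Fin 2)} {R : ℝ} {i : Fin n}

theorem lt_dist_of_initiates {j k : Fin n} (hj : initiates n x R i j) (hk : initiates n x R i k)
    (hjk : j ≠ k) : R < dist (x j) (x k) := by
  obtain ⟨hjN, hj_max⟩ := hj
  obtain ⟨hkN, hk_max⟩ := hk
  by_contra! hle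
  have hadj : ((gilbert n x R).induce (lesserN n x R i)).Adj ⟨j, hjN⟩ ⟨k, hkN⟩ := ⟨hjk, hle⟩
  exact hjk (le_antisymm (hk_max j hjN hadj.symm.reachable) (hj_max k hkN hadj.reachable))

theorem card_MsetF_le_five : (MsetF n x R i).card ≤ 5 := by
  have : Fact (Module.finrank ℝ (EuclideanSpace ℝ (Fin 2)) = 2) := ⟨finrank_euclideanSpace_fin⟩
  have hM : ∀ j ∈ MsetF n x R i, initiates n x R i j := fun j hj => (Finset.mem_filter.1 hj).2
  refine card_le_five_of_pairwise_lt_dist (p := x) (c := x i) (fun j hj => ?_)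
    fun j hj k hk hjk => lt_dist_of_initiates (hM j hj) (hM k hk) hjk
  rw [dist_comm]
  exact (hM j hj).1.2

theorem card_phaseMax_le (δ : ℕ) (pool : Finset (Fin n)) (fuel : ℕ) (C : Finset (Fin n)) :
    (phaseMax δ pool fuel C).card ≤ max C.card δ := by
  induction fuel generalizing C with
  | zero => exact le_max_left _ _
  | succ fuel ih =>
    rw [phaseMax]
    split_ifs with h
    · exact (ih _).trans <| (max_le ((Finset.card_insert_le _ _).trans h.1) le_rfl).trans
        (le_max_right _ _)
    · exact le_max_left _ _

theorem card_phaseMin_le (δ : ℕ) (pool : Finset (Fin n)) (fuel : ℕ) (C : Finset (Fin n)) :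
    (phaseMin δ pool fuel C).card ≤ max C.card δ := by
  induction fuel generalizing C with
  | zero => exact le_max_left _ _
  | succ fuel ih =>
    rw [phaseMin]
    split_ifs with h
    · exact (ih _).trans <| (max_le ((Finset.card_insert_le _ _).trans h.1) le_rfl).trans
        (le_max_right _ _)
    · exact le_max_left _ _

theorem card_Cset_le (δ : ℕ) (i : Fin n) : (Cset n x R δ i).card ≤ max δ 5 := by
  have h₁ := card_phaseMin_le δ (greaterF n x R i) n
    (phaseMax δ (lesserF n x R i) n (MsetF n x R i))
  have h₂ := card_phaseMax_le δ (lesserF n x R i) n (MsetF n x R i)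
  have h₃ : (MsetF n x R i).card ≤ 5 := card_MsetF_le_five
  rw [Cset]
  omega

end Algorithm

theorem topo2_card_Cset_le_and_edges_le_general
    (n : ℕ) (x : Fin n → EuclideanSpace ℝ (Fin 2)) (R : ℝ)
    (δ : ℕ) :
    (∀ i : Fin n, (Cset n x R δ i).card ≤ max δ 5) ∧
    (topo2 n x R δ).edgeSet.ncard ≤ max δ 5 * n := by
  refine ⟨card_Cset_le δ, ?_⟩
  simpa using (topo2 n x R δ).ncard_edgeSet_le_mul_card (Cset n x R δ) (card_Cset_le δ)
    fun _ _ h => h.2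

/-- Under Algorithm 2, each vertex initiates at most `max δ 5` connections, so the final
topology has at most `max δ 5 * n` edges. -/
theorem topo2_card_Cset_le_and_edges_le
    (n : ℕ) (x : Fin n → EuclideanSpace ℝ (Fin 2)) (R : ℝ) (hR : 0 < R)
    (δ : ℕ) (hδ : 1 ≤ δ) :
    (∀ i : Fin n, (Cset n x R δ i).card ≤ max δ 5) ∧
    (topo2 n x R δ).edgeSet.ncard ≤ max δ 5 * n :=
  topo2_card_Cset_le_and_edges_le_general n x R δ
end
end

section
/- Under Algorithm 2 with parameter δ ≥ 1, for every vertex i, the degree of i in the final topology is at least min{deg_G(i), δ}, where deg_G(i) is the degree of i in the Gilbert graph. In particular, if the Gilbert graph has minimum degree δ, the final topology has minimum degree at least δ. -/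
noncomputable section

attribute [local instance] Classical.propDecidable

/-! Every vertex of `C_i` is a Gilbert neighbour of `i`, so `|C_i|` bounds the degree of `i` in
the final topology. Each greedy phase of Algorithm 2 stops only when `|C_i| ≥ δ` or its pool (the
lesser, resp. greater, Gilbert neighbourhood of `i`) is used up; so after both phases either
`|C_i| ≥ δ` or `C_i` contains the whole Gilbert neighbourhood of `i`. -/

open Finset

section GreedyFill

variable {α : Type*} [DecidableEq α] (δ : ℕ) (pool : Finset α)
  (pick : ∀ s : Finset α, s.Nonempty → α)

def greedyFill : ℕ → Finset α → Finset α
  | 0, C => C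
  | fuel + 1, C =>
    if h : #C < δ ∧ (pool \ C).Nonempty then
      greedyFill fuel (insert (pick (pool \ C) h.2) C)
    else C

theorem subset_greedyFill (fuel : ℕ) (C : Finset α) : C ⊆ greedyFill δ pool pick fuel C := by
  induction fuel generalizing C with
  | zero => exact Subset.rfl
  | succ fuel ih =>
    rw [greedyFill]
    split_ifs
    · exact (subset_insert _ _).trans (ih _)
    · exact Subset.rfl

variable {pick}

theorem greedyFill_subset_union (hpick : ∀ s hs, pick s hs ∈ s) (fuel : ℕ) (C : Finset α) :
    greedyFill δ pool pick fuel C ⊆ C ∪ pool := by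
  induction fuel generalizing C with
  | zero => exact subset_union_left
  | succ fuel ih =>
    rw [greedyFill]
    split_ifs with h
    · refine (ih _).trans (union_subset (insert_subset ?_ subset_union_left) subset_union_right)
      exact mem_union_right _ (mem_sdiff.1 (hpick _ h.2)).1
    · exact subset_union_left

theorem le_card_greedyFill_or_subset (hpick : ∀ s hs, pick s hs ∈ s) {fuel : ℕ}
    {C : Finset α} (hfuel : #(pool \ C) ≤ fuel) :
    δ ≤ #(greedyFill δ pool pick fuel C) ∨ pool ⊆ greedyFill δ pool pick fuel C := by
  induction fuel generalizing C with
  | zero =>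
    exact Or.inr (sdiff_eq_empty_iff_subset.1 (card_eq_zero.1 (Nat.le_zero.1 hfuel)))
  | succ fuel ih =>
    rw [greedyFill]
    split_ifs with h
    · apply ih
      rw [sdiff_insert, card_erase_of_mem (hpick _ h.2)]
      omega
    · rw [not_and_or, not_lt, not_nonempty_iff_eq_empty, sdiff_eq_empty_iff_subset] at h
      exact h

theorem min_card_union_le_card_greedyFill_greedyFill {pick' : ∀ s : Finset α, s.Nonempty → α}
    (hpick : ∀ s hs, pick s hs ∈ s) (hpick' : ∀ s hs, pick' s hs ∈ s) (pool' : Finset α)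
    {fuel fuel' : ℕ} (hfuel : #pool ≤ fuel) (hfuel' : #pool' ≤ fuel') (C : Finset α) :
    min #(pool ∪ pool') δ ≤
      #(greedyFill δ pool' pick' fuel' (greedyFill δ pool pick fuel C)) := by
  set A := greedyFill δ pool pick fuel C
  have hA : A ⊆ greedyFill δ pool' pick' fuel' A := subset_greedyFill ..
  rcases le_card_greedyFill_or_subset δ pool' hpick'
    ((card_le_card sdiff_subset).trans hfuel') with h | h'
  · exact min_le_of_right_le h
  rcases le_card_greedyFill_or_subset δ pool hpick
    ((card_le_card sdiff_subset).trans hfuel) with h | h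
  · exact min_le_of_right_le (h.trans (card_le_card hA))
  · exact min_le_of_left_le (card_le_card (union_subset (h.trans hA) h'))

end GreedyFill

theorem phaseMax_eq_greedyFill {n : ℕ} (δ : ℕ) (pool : Finset (Fin n)) (fuel : ℕ)
    (C : Finset (Fin n)) : phaseMax δ pool fuel C = greedyFill δ pool (·.max' ·) fuel C := by
  induction fuel generalizing C with
  | zero => rfl
  | succ fuel ih => rw [phaseMax, greedyFill]; split_ifs <;> simp only [ih]

theorem phaseMin_eq_greedyFill {n : ℕ} (δ : ℕ) (pool : Finset (Fin n)) (fuel : ℕ)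
    (C : Finset (Fin n)) : phaseMin δ pool fuel C = greedyFill δ pool (·.min' ·) fuel C := by
  induction fuel generalizing C with
  | zero => rfl
  | succ fuel ih => rw [phaseMin, greedyFill]; split_ifs <;> simp only [ih]

section Topology

variable (n : ℕ) (x : Fin n → EuclideanSpace ℝ (Fin 2)) (R : ℝ) (δ : ℕ) (i : Fin n)

theorem MsetF_subset_lesserF : MsetF n x R i ⊆ lesserF n x R i := by
  intro j hj
  obtain ⟨hj, -⟩ := (mem_filter.1 hj).2
  exact mem_filter.2 ⟨mem_univ _, hj⟩

theorem Cset_subset_lesserF_union_greaterF :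
    Cset n x R δ i ⊆ lesserF n x R i ∪ greaterF n x R i := by
  rw [Cset, phaseMin_eq_greedyFill, phaseMax_eq_greedyFill]
  refine (greedyFill_subset_union _ _ (fun s hs => s.min'_mem hs) _ _).trans
    (union_subset_union ?_ Subset.rfl)
  refine (greedyFill_subset_union _ _ (fun s hs => s.max'_mem hs) _ _).trans ?_
  exact union_subset (MsetF_subset_lesserF ..) Subset.rfl

theorem min_card_le_card_Cset :
    min #(lesserF n x R i ∪ greaterF n x R i) δ ≤ #(Cset n x R δ i) := by
  rw [Cset, phaseMin_eq_greedyFill, phaseMax_eq_greedyFill]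
  exact min_card_union_le_card_greedyFill_greedyFill δ _ (fun s hs => s.max'_mem hs)
    (fun s hs => s.min'_mem hs) _ (card_le_univ _ |>.trans_eq (Fintype.card_fin n))
    (card_le_univ _ |>.trans_eq (Fintype.card_fin n)) _

theorem gilbert_neighborSet_eq :
    (gilbert n x R).neighborSet i = ↑(lesserF n x R i ∪ greaterF n x R i) := by
  ext j
  simp only [SimpleGraph.mem_neighborSet, gilbert, lesserF, greaterF, coe_union, coe_filter,
    mem_univ, true_and, Set.mem_union, Set.mem_ofPred_eq, ne_iff_lt_or_gt]
  tauto

theorem coe_Cset_subset_neighborSet_topo2 :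
    ↑(Cset n x R δ i) ⊆ (topo2 n x R δ).neighborSet i := by
  intro j hj
  have hne : i ≠ j := by
    rcases mem_union.1 (Cset_subset_lesserF_union_greaterF n x R δ i hj) with h | h
    · exact (mem_filter.1 h).2.1.ne'
    · exact (mem_filter.1 h).2.1.ne
  exact ⟨hne, Or.inl hj⟩

end Topology

theorem topo2_degree_lower_bound_general
    (n : ℕ) (x : Fin n → EuclideanSpace ℝ (Fin 2)) (R : ℝ)
    (δ : ℕ) (i : Fin n) :
    min (Nat.card ((gilbert n x R).neighborSet i)) δ ≤
      Nat.card ((topo2 n x R δ).neighborSet i) := by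
  rw [gilbert_neighborSet_eq, Nat.card_coe_set_eq, Set.ncard_coe_finset]
  calc min #(lesserF n x R i ∪ greaterF n x R i) δ
      ≤ #(Cset n x R δ i) := min_card_le_card_Cset n x R δ i
    _ = Nat.card (Cset n x R δ i : Set (Fin n)) := (Nat.card_eq_finsetCard _).symm
    _ ≤ Nat.card ((topo2 n x R δ).neighborSet i) :=
      Nat.card_mono (Set.toFinite _) (coe_Cset_subset_neighborSet_topo2 n x R δ i)

/-- Under Algorithm 2, every vertex has degree at least `min (deg_G i) δ` in the final
topology, where `deg_G i` is its degree in the Gilbert graph. -/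
theorem topo2_degree_lower_bound
    (n : ℕ) (x : Fin n → EuclideanSpace ℝ (Fin 2)) (R : ℝ) (hR : 0 < R)
    (δ : ℕ) (hδ : 1 ≤ δ) (i : Fin n) :
    min (Nat.card ((gilbert n x R).neighborSet i)) δ ≤
      Nat.card ((topo2 n x R δ).neighborSet i) :=
  topo2_degree_lower_bound_general n x R δ i
end
end
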